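/- arXiv:1409.6492 — 3 statements merged into one kernel-verified Lean document; each statement's English description precedes it below -/
import Mathlib

section
/- If U is transient with respect to m (i.e. there exists f ∈ pB ∩ L¹(E,m) with f > 0 m-a.e. and Uf < ∞ m-a.e.), then there exists f₀ ∈ pB ∩ L¹(E,m) with 0 < f₀ ≤ 1 m-a.e. such that U f₀ ≤ 1 everywhere on E. -/
open MeasureTheory ENNReal Filter Set

/-- A sub-Markovian resolvent of kernels on a measurable space `E`. -/
structure SubMarkovResolvent (E : Type*) [MeasurableSpace E] where
  /-- the kernel `U_α` for each `α > 0` -/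
  kernel : ℝ → E → MeasureTheory.Measure E
  measurable_op : ∀ α : ℝ, 0 < α → ∀ f : E → ℝ≥0∞, Measurable f →
    Measurable (fun x => ∫⁻ y, f y ∂(kernel α x))
  resolvent_eq : ∀ α β : ℝ, 0 < α → α ≤ β → ∀ f : E → ℝ≥0∞, Measurable f → ∀ x,
    ∫⁻ y, f y ∂(kernel α x)
      = (∫⁻ y, f y ∂(kernel β x))
        + ENNReal.ofReal (β - α) * ∫⁻ y, (∫⁻ z, f z ∂(kernel β y)) ∂(kernel α x)
  subMarkov : ∀ α : ℝ, 0 < α → ∀ x, ENNReal.ofReal α * kernel α x Set.univ ≤ 1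

namespace SubMarkovResolvent

variable {E : Type*} [MeasurableSpace E]

/-- The action of `U_α` on positive measurable functions. -/
noncomputable def op (R : SubMarkovResolvent E) (α : ℝ) (f : E → ℝ≥0∞) (x : E) : ℝ≥0∞ :=
  ∫⁻ y, f y ∂(R.kernel α x)

/-- The action of `U_α` on real-valued functions. -/
noncomputable def opR (R : SubMarkovResolvent E) (α : ℝ) (f : E → ℝ) (x : E) : ℝ :=
  ∫ y, f y ∂(R.kernel α x)

/-- The initial (potential) kernel `U = sup_{α > 0} U_α`. -/
noncomputable def pot (R : SubMarkovResolvent E) (f : E → ℝ≥0∞) (x : E) : ℝ≥0∞ :=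
  ⨆ (α : ℝ) (_ : 0 < α), R.op α f x

/-- `m` is sub-invariant: `m ∘ (α U_α) ≤ m` for all `α > 0`. -/
def SubInvariant (R : SubMarkovResolvent E) (m : Measure E) : Prop :=
  ∀ α : ℝ, 0 < α → ∀ f : E → ℝ≥0∞, Measurable f →
    ENNReal.ofReal α * ∫⁻ x, R.op α f x ∂m ≤ ∫⁻ x, f x ∂m

/-- `U` is `m`-transient. -/
def Transient (R : SubMarkovResolvent E) (m : Measure E) : Prop :=
  ∃ f : E → ℝ≥0∞, Measurable f ∧ (∫⁻ x, f x ∂m < ⊤) ∧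
    (∀ᵐ x ∂m, 0 < f x) ∧ (∀ᵐ x ∂m, R.pot f x < ⊤)

/-- `U` is `m`-recurrent. -/
def Recurrent (R : SubMarkovResolvent E) (m : Measure E) : Prop :=
  ∀ f : E → ℝ≥0∞, Measurable f → (∫⁻ x, f x ∂m < ⊤) →
    m {x | 0 < R.pot f x ∧ R.pot f x < ⊤} = 0

/-- `A` is `U`-absorbing with respect to `m`. -/
def Absorbing (R : SubMarkovResolvent E) (m : Measure E) (A : Set E) : Prop :=
  MeasurableSet A ∧ ∀ᵐ x ∂m, x ∈ A → R.pot (Set.indicator Aᶜ 1) x = 0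

/-- `U` is `m`-irreducible. -/
def Irreducible (R : SubMarkovResolvent E) (m : Measure E) : Prop :=
  ∀ A : Set E, R.Absorbing m A → m A = 0 ∨ m Aᶜ = 0

/-- `u` is `U`-excessive: supermedian and `α U_α u ↑ u` as `α → ∞`. -/
def Excessive (R : SubMarkovResolvent E) (u : E → ℝ≥0∞) : Prop :=
  Measurable u ∧ (∀ α : ℝ, 0 < α → ∀ x, ENNReal.ofReal α * R.op α u x ≤ u x) ∧
    (∀ x, (⨆ (α : ℝ) (_ : 0 < α), ENNReal.ofReal α * R.op α u x) = u x)

/-- The complete maximum principle for the initial kernel of `U`. -/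
def CompleteMaxPrinciple (R : SubMarkovResolvent E) : Prop :=
  ∀ (f g : E → ℝ≥0∞) (c : ℝ≥0∞), Measurable f → Measurable g →
    (∀ x, 0 < f x → R.pot f x ≤ R.pot g x + c) → ∀ x, R.pot f x ≤ R.pot g x + c

/-- `U` and `U*` are in weak duality with respect to `m`. -/
def InDuality (R S : SubMarkovResolvent E) (m : Measure E) : Prop :=
  ∀ α : ℝ, 0 < α → ∀ f g : E → ℝ≥0∞, Measurable f → Measurable g →
    ∫⁻ x, f x * R.op α g x ∂m = ∫⁻ x, g x * S.op α f x ∂m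

/-- A real-valued function `v` is `U`-invariant with respect to `m`:
`U_α(v f) = v ⋅ U_α f` `m`-a.e. for all `α > 0` and bounded positive measurable `f`. -/
def Invariant (R : SubMarkovResolvent E) (m : Measure E) (v : E → ℝ) : Prop :=
  ∀ α : ℝ, 0 < α → ∀ f : E → ℝ, Measurable f → (∀ x, 0 ≤ f x) → (∃ C : ℝ, ∀ x, f x ≤ C) →
    ∀ᵐ x ∂m, R.opR α (fun y => v y * f y) x = v x * R.opR α f x

end SubMarkovResolvent


namespace SubMarkovResolvent

variable {E : Type*} [MeasurableSpace E]

lemma op_mono (R : SubMarkovResolvent E) {f g : E → ℝ≥0∞} (h : ∀ y, f y ≤ g y) (α : ℝ) (x : E) :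
    R.op α f x ≤ R.op α g x :=
  lintegral_mono h

lemma op_antitone (R : SubMarkovResolvent E) {f : E → ℝ≥0∞} (hf : Measurable f)
    {α β : ℝ} (hα : 0 < α) (hαβ : α ≤ β) (x : E) : R.op β f x ≤ R.op α f x := by
  have h := R.resolvent_eq α β hα hαβ f hf x
  simp only [SubMarkovResolvent.op]
  rw [h]
  exact le_add_right le_rfl

lemma pot_eq_rat_sup (R : SubMarkovResolvent E) {f : E → ℝ≥0∞} (hf : Measurable f) (x : E) :
    R.pot f x = ⨆ (q : ℚ) (_ : 0 < (q : ℝ)), R.op q f x := by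
  apply le_antisymm
  · refine iSup₂_le fun α hα => ?_
    obtain ⟨q, hq0, hqα⟩ := exists_rat_btwn hα
    calc R.op α f x ≤ R.op q f x := R.op_antitone hf hq0 hqα.le x
      _ ≤ _ := le_iSup₂ (f := fun (q : ℚ) (_ : 0 < (q : ℝ)) => R.op q f x) q hq0
  · exact iSup₂_le fun q hq => le_iSup₂ (f := fun (α : ℝ) (_ : 0 < α) => R.op α f x) (q : ℝ) hq

lemma pot_measurable (R : SubMarkovResolvent E) {f : E → ℝ≥0∞} (hf : Measurable f) :
    Measurable (R.pot f) := by
  have : R.pot f = fun x => ⨆ (q : ℚ) (_ : 0 < (q : ℝ)), R.op q f x := by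
    funext x; exact R.pot_eq_rat_sup hf x
  rw [this]
  exact Measurable.iSup fun q => Measurable.iSup fun hq => R.measurable_op q hq f hf

lemma pot_mono (R : SubMarkovResolvent E) {f g : E → ℝ≥0∞} (h : ∀ y, f y ≤ g y) (x : E) :
    R.pot f x ≤ R.pot g x :=
  iSup₂_mono fun α _ => R.op_mono h α x

lemma pot_zero (R : SubMarkovResolvent E) (x : E) : R.pot (fun _ => (0 : ℝ≥0∞)) x = 0 := by
  simp [SubMarkovResolvent.pot, SubMarkovResolvent.op]

lemma pot_const_mul (R : SubMarkovResolvent E) (c : ℝ≥0∞) {f : E → ℝ≥0∞} (hf : Measurable f)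
    (x : E) : R.pot (fun y => c * f y) x = c * R.pot f x := by
  simp only [SubMarkovResolvent.pot, SubMarkovResolvent.op]
  rw [ENNReal.mul_iSup]
  refine iSup_congr fun α => ?_
  rw [ENNReal.mul_iSup]
  exact iSup_congr fun _ => lintegral_const_mul c hf

end SubMarkovResolvent

/-- If `U` is `m`-transient, then there exists `f₀ ∈ pB ∩ L¹(E,m)` with `0 < f₀ ≤ 1` `m`-a.e.
such that `U f₀ ≤ 1` everywhere on `E`. -/
theorem transient_exists_bounded_potential {E : Type*} [MeasurableSpace E]
    (R : SubMarkovResolvent E) (hCMP : R.CompleteMaxPrinciple)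
    (m : MeasureTheory.Measure E) [MeasureTheory.SigmaFinite m]
    (hm : R.SubInvariant m) (hT : R.Transient m) :
    ∃ f₀ : E → ℝ≥0∞, Measurable f₀ ∧ (∫⁻ x, f₀ x ∂m < ⊤) ∧
      (∀ᵐ x ∂m, 0 < f₀ x ∧ f₀ x ≤ 1) ∧ (∀ x, R.pot f₀ x ≤ 1) := by
  classical
  obtain ⟨f, hfm, hfint, hfpos, hfpot⟩ := hT
  -- h = min f 1
  set h : E → ℝ≥0∞ := fun x => min (f x) 1 with hh
  have hhm : Measurable h := hfm.min measurable_const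
  have hhle1 : ∀ x, h x ≤ 1 := fun x => min_le_right _ _
  have hhlef : ∀ x, h x ≤ f x := fun x => min_le_left _ _
  -- coefficients
  set c : ℕ → ℝ≥0∞ := fun n => (2⁻¹ : ℝ≥0∞) ^ (n + 1) * ((n : ℝ≥0∞) + 1)⁻¹ with hc
  have hcpos : ∀ n, 0 < c n := by
    intro n
    apply ENNReal.mul_pos
    · exact pow_ne_zero _ (by norm_num)
    · simp
  have hcle : ∀ n, c n ≤ (2⁻¹ : ℝ≥0∞) ^ (n + 1) := by
    intro n
    calc c n ≤ (2⁻¹ : ℝ≥0∞) ^ (n + 1) * 1 := by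
          refine mul_le_mul_right ?_ _
          exact ENNReal.inv_le_one.mpr (by simp)
      _ = _ := mul_one _
  have hcmul : ∀ n, c n * ((n : ℝ≥0∞) + 1) ≤ (2⁻¹ : ℝ≥0∞) ^ (n + 1) := by
    intro n
    rw [hc]
    rw [mul_assoc, ENNReal.inv_mul_cancel (by simp) (by simp), mul_one]
  have hsum : (∑' n : ℕ, ((2 : ℝ≥0∞)⁻¹) ^ (n + 1)) = 1 := by
    have e1 : (∑' n : ℕ, ((2 : ℝ≥0∞)⁻¹) ^ (n + 1))
        = 2⁻¹ * ∑' n : ℕ, ((2 : ℝ≥0∞)⁻¹) ^ n := by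
      rw [← ENNReal.tsum_mul_left]
      congr 1; funext n; ring
    rw [e1, ENNReal.tsum_geometric, ENNReal.one_sub_inv_two, inv_inv]
    exact ENNReal.inv_mul_cancel two_ne_zero ENNReal.ofNat_ne_top
  -- the absorbing-type sets
  have hpothm : Measurable (R.pot h) := R.pot_measurable hhm
  set B : ℕ → Set E := fun n => {x | R.pot h x ≤ (n : ℝ≥0∞) + 1} with hB
  have hBmeas : ∀ n, MeasurableSet (B n) := fun n => hpothm measurableSet_Iic
  set g : ℕ → E → ℝ≥0∞ := fun n x => c n * (B n).indicator h x with hg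
  have hgmeas : ∀ n, Measurable (g n) := fun n => (hhm.indicator (hBmeas n)).const_mul _
  have hgle : ∀ n x, g n x ≤ c n * h x := fun n x =>
    mul_le_mul_right (Set.indicator_le_self _ _ x) _
  have hindle : ∀ n x, (B n).indicator h x ≤ h x := fun n x => Set.indicator_le_self _ _ x
  -- pot (g n) ≤ 2⁻¹ ^ (n+1) everywhere, by the complete maximum principle
  have hgpot : ∀ n x, R.pot (g n) x ≤ ((2 : ℝ≥0∞)⁻¹) ^ (n + 1) := by
    intro n x
    have key : ∀ y, 0 < g n y →
        R.pot (g n) y ≤ R.pot (fun _ => (0 : ℝ≥0∞)) y + ((2 : ℝ≥0∞)⁻¹) ^ (n + 1) := by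
      intro y hy
      have hyB : y ∈ B n := by
        by_contra hyB
        simp [hg, Set.indicator_of_notMem hyB] at hy
      have h1 : R.pot (g n) y = c n * R.pot ((B n).indicator h) y :=
        R.pot_const_mul (c n) (hhm.indicator (hBmeas n)) y
      have h2 : R.pot ((B n).indicator h) y ≤ R.pot h y := R.pot_mono (hindle n) y
      have h3 : R.pot h y ≤ (n : ℝ≥0∞) + 1 := hyB
      calc R.pot (g n) y ≤ c n * ((n : ℝ≥0∞) + 1) := by
            rw [h1]; exact mul_le_mul_right (h2.trans h3) _
        _ ≤ ((2 : ℝ≥0∞)⁻¹) ^ (n + 1) := hcmul n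
        _ ≤ _ := le_add_self
    have := hCMP (g n) (fun _ => 0) (((2 : ℝ≥0∞)⁻¹) ^ (n + 1)) (hgmeas n)
      measurable_const key x
    rwa [R.pot_zero, zero_add] at this
  -- the function f₀
  refine ⟨fun x => ∑' n, g n x, Measurable.ennreal_tsum hgmeas, ?_, ?_, ?_⟩
  · -- integrability
    rw [lintegral_tsum fun n => (hgmeas n).aemeasurable]
    have : ∀ n, ∫⁻ x, g n x ∂m ≤ ((2 : ℝ≥0∞)⁻¹) ^ (n + 1) * ∫⁻ x, f x ∂m := by
      intro n
      calc ∫⁻ x, g n x ∂m ≤ ∫⁻ x, c n * h x ∂m := lintegral_mono (hgle n)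
        _ = c n * ∫⁻ x, h x ∂m := lintegral_const_mul _ hhm
        _ ≤ ((2 : ℝ≥0∞)⁻¹) ^ (n + 1) * ∫⁻ x, f x ∂m :=
            mul_le_mul' (hcle n) (lintegral_mono hhlef)
    calc (∑' n, ∫⁻ x, g n x ∂m) ≤ ∑' n, ((2 : ℝ≥0∞)⁻¹) ^ (n + 1) * ∫⁻ x, f x ∂m :=
          ENNReal.tsum_le_tsum this
      _ = (∑' n, ((2 : ℝ≥0∞)⁻¹) ^ (n + 1)) * ∫⁻ x, f x ∂m := ENNReal.tsum_mul_right
      _ = ∫⁻ x, f x ∂m := by rw [hsum, one_mul]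
      _ < ⊤ := hfint
  · -- a.e. positivity and ≤ 1
    filter_upwards [hfpos, hfpot] with x hx0 hxpot
    constructor
    · have hhx : 0 < h x := lt_min hx0 one_pos
      have hpotx : R.pot h x < ⊤ := lt_of_le_of_lt (R.pot_mono hhlef x) hxpot
      obtain ⟨n, hn⟩ := ENNReal.exists_nat_gt hpotx.ne
      have hxB : x ∈ B n := le_trans hn.le le_self_add
      have : 0 < g n x := by
        rw [hg]
        exact ENNReal.mul_pos (hcpos n).ne' (by
          rw [Set.indicator_of_mem hxB]; exact hhx.ne')
      exact lt_of_lt_of_le this (ENNReal.le_tsum n)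
    · calc (∑' n, g n x) ≤ ∑' n, ((2 : ℝ≥0∞)⁻¹) ^ (n + 1) := by
            refine ENNReal.tsum_le_tsum fun n => ?_
            calc g n x ≤ c n * h x := hgle n x
              _ ≤ ((2 : ℝ≥0∞)⁻¹) ^ (n + 1) * 1 := mul_le_mul' (hcle n) (hhle1 x)
              _ = _ := mul_one _
        _ = 1 := hsum
  · -- the potential is bounded by 1 everywhere
    intro x
    refine iSup₂_le fun α hα => ?_
    have e1 : R.op α (fun y => ∑' n, g n y) x = ∑' n, R.op α (g n) x := by
      simp only [SubMarkovResolvent.op]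
      exact lintegral_tsum fun n => (hgmeas n).aemeasurable
    rw [e1]
    calc (∑' n, R.op α (g n) x) ≤ ∑' n, ((2 : ℝ≥0∞)⁻¹) ^ (n + 1) := by
          refine ENNReal.tsum_le_tsum fun n => ?_
          refine le_trans ?_ (hgpot n x)
          exact le_iSup₂ (f := fun (β : ℝ) (_ : 0 < β) => R.op β (g n) x) α hα
      _ = 1 := hsum
end

section
/- Suppose αU*_α 1 = 1 m-a.e. for all α > 0 and there exists a U-excessive function s ∈ L¹(E,m) with s > 0 m-a.e. Then U is m-recurrent. -/
open MeasureTheory ENNReal Filter Set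

open Topology Finset

/-! Expanding the resolvent equation between `U_ε` and `U_1` and letting `ε → 0` gives
`U = ∑_{j ≥ 1} U_1^j`. Duality with a conservative `U*` makes `m` invariant under `U_1`, so the
integrable `U_1`-supermedian function `v = min (U f) s` satisfies `U_1^k v = v` a.e. for every `k`.
But `U_1^k v ≤ U_1^k (U f) = ∑_{j > k} U_1^j f`, the tail of a convergent series where `U f < ∞`.
Hence `v = 0` a.e. on `{U f < ∞}`, and as `s > 0` a.e., `U f = 0` a.e. there. -/

namespace SubMarkovResolvent

variable {E : Type*} [MeasurableSpace E] (R : SubMarkovResolvent E)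

theorem monotone_op (α : ℝ) : Monotone (R.op α) :=
  fun _ _ h _ => lintegral_mono h

theorem measurable_iterate_op_one {f : E → ℝ≥0∞} (hf : Measurable f) (k : ℕ) :
    Measurable ((R.op 1)^[k] f) := by
  induction k with
  | zero => exact hf
  | succ k ih =>
    rw [Function.iterate_succ_apply']
    exact R.measurable_op 1 one_pos _ ih

theorem antitoneOn_op {f : E → ℝ≥0∞} (hf : Measurable f) (x : E) :
    AntitoneOn (fun α => R.op α f x) (Ioi 0) := fun α hα β _ hαβ => by
  simp only [op]
  rw [R.resolvent_eq α β hα hαβ f hf x]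
  exact le_self_add

theorem op_le_pot (f : E → ℝ≥0∞) {α : ℝ} (hα : 0 < α) (x : E) : R.op α f x ≤ R.pot f x :=
  le_iSup₂ (f := fun (α : ℝ) (_ : 0 < α) => R.op α f x) α hα

theorem op_const_le {α : ℝ} (hα : 0 < α) (C : ℝ≥0∞) (x : E) :
    R.op α (fun _ => C) x ≤ (ENNReal.ofReal α)⁻¹ * C := by
  rw [op, lintegral_const, mul_comm]
  gcongr
  rw [ENNReal.le_inv_iff_mul_le, mul_comm]
  exact R.subMarkov α hα x

theorem iterate_op_one_le_const {f : E → ℝ≥0∞} {C : ℝ≥0∞} (hfC : f ≤ fun _ => C) (k : ℕ) :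
    (R.op 1)^[k] f ≤ fun _ => C := by
  have hC : R.op 1 (fun _ => C) ≤ fun _ => C := fun x => by
    simpa using R.op_const_le one_pos C x
  calc (R.op 1)^[k] f ≤ (R.op 1)^[k] (fun _ => C) := (R.monotone_op 1).iterate k hfC
    _ ≤ fun _ => C := (R.monotone_op 1).antitone_iterate_of_map_le hC (Nat.zero_le k)

theorem op_eq_sum_add {f : E → ℝ≥0∞} (hf : Measurable f) {ε : ℝ} (hε : 0 < ε) (hε1 : ε ≤ 1)
    (k : ℕ) (x : E) :
    R.op ε f x = ∑ j ∈ range k, ENNReal.ofReal (1 - ε) ^ j * (R.op 1)^[j + 1] f x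
      + ENNReal.ofReal (1 - ε) ^ k * R.op ε ((R.op 1)^[k] f) x := by
  induction k with
  | zero => simp
  | succ k ih =>
    have hres : R.op ε ((R.op 1)^[k] f) x = (R.op 1)^[k + 1] f x
        + ENNReal.ofReal (1 - ε) * R.op ε ((R.op 1)^[k + 1] f) x := by
      rw [Function.iterate_succ_apply']
      exact R.resolvent_eq ε 1 hε hε1 _ (R.measurable_iterate_op_one hf k) x
    rw [ih, hres, sum_range_succ]
    ring

theorem sum_iterate_op_one_le_pot {f : E → ℝ≥0∞} (hf : Measurable f) (k : ℕ) (x : E) :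
    ∑ j ∈ range k, (R.op 1)^[j + 1] f x ≤ R.pot f x := by
  have hlim : Tendsto
      (fun ε : ℝ => ∑ j ∈ range k, ENNReal.ofReal (1 - ε) ^ j * (R.op 1)^[j + 1] f x) (𝓝[>] 0)
      (𝓝 (∑ j ∈ range k, (R.op 1)^[j + 1] f x)) := by
    have hc : Tendsto (fun ε : ℝ => ENNReal.ofReal (1 - ε)) (𝓝[>] 0) (𝓝 1) := by
      have h := (tendsto_const_nhds (x := (1 : ℝ))).sub (tendsto_id (x := 𝓝 (0 : ℝ)))
      simpa using ENNReal.tendsto_ofReal (h.mono_left nhdsWithin_le_nhds)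
    simpa using tendsto_finsetSum _ fun j _ =>
      ENNReal.Tendsto.mul_const (ENNReal.Tendsto.pow hc) (Or.inl (by simp))
  refine le_of_tendsto hlim ?_
  filter_upwards [Ioc_mem_nhdsGT one_pos] with ε hε
  calc ∑ j ∈ range k, ENNReal.ofReal (1 - ε) ^ j * (R.op 1)^[j + 1] f x
      ≤ R.op ε f x := by rw [R.op_eq_sum_add hf hε.1 hε.2 k x]; exact le_self_add
    _ ≤ R.pot f x := R.op_le_pot f hε.1 x

theorem op_le_tsum_iterate_of_le_const {f : E → ℝ≥0∞} (hf : Measurable f) {C : ℝ≥0∞}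
    (hC : C ≠ ⊤) (hfC : f ≤ fun _ => C) {α : ℝ} (hα : 0 < α) (x : E) :
    R.op α f x ≤ ∑' j, (R.op 1)^[j + 1] f x := by
  rcases le_or_gt α 1 with hα1 | hα1
  · set c := ENNReal.ofReal (1 - α)
    set D := (ENNReal.ofReal α)⁻¹ * C
    have hc : c < 1 := ENNReal.ofReal_lt_one.mpr (by linarith)
    have hD : D ≠ ⊤ := ENNReal.mul_ne_top (by simpa using hα) hC
    have hbound : ∀ k, R.op α f x ≤ ∑' j, (R.op 1)^[j + 1] f x + c ^ k * D := fun k => by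
      rw [R.op_eq_sum_add hf hα hα1 k x]
      gcongr
      · calc ∑ j ∈ range k, c ^ j * (R.op 1)^[j + 1] f x
            ≤ ∑ j ∈ range k, (R.op 1)^[j + 1] f x :=
              sum_le_sum fun j _ => mul_le_of_le_one_left' (pow_le_one₀ zero_le hc.le)
          _ ≤ _ := ENNReal.sum_le_tsum _
      · exact (R.monotone_op α (R.iterate_op_one_le_const hfC k) x).trans (R.op_const_le hα C x)
    have hlim : Tendsto (fun k => ∑' j, (R.op 1)^[j + 1] f x + c ^ k * D) atTop
        (𝓝 (∑' j, (R.op 1)^[j + 1] f x)) := by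
      simpa using tendsto_const_nhds.add
        (ENNReal.Tendsto.mul_const (ENNReal.tendsto_pow_atTop_nhds_zero_of_lt_one hc) (Or.inr hD))
    exact ge_of_tendsto' hlim hbound
  · calc R.op α f x ≤ R.op 1 f x := R.antitoneOn_op hf x (mem_Ioi.mpr one_pos) hα hα1.le
      _ ≤ ∑' j, (R.op 1)^[j + 1] f x := ENNReal.le_tsum 0

/-- Truncating `f` at level `n` reduces to the bounded case. -/
theorem op_le_tsum_iterate {f : E → ℝ≥0∞} (hf : Measurable f) {α : ℝ} (hα : 0 < α) (x : E) :
    R.op α f x ≤ ∑' j, (R.op 1)^[j + 1] f x := by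
  set g : ℕ → E → ℝ≥0∞ := fun n y => f y ⊓ n
  have hg : ∀ n, Measurable (g n) := fun n => hf.inf measurable_const
  have hg_mono : Monotone g := fun a b hab y => inf_le_inf_left _ (by exact_mod_cast hab)
  have hfg : f = fun y => ⨆ n, g n y := funext fun y => by
    rw [← inf_iSup_eq, ENNReal.iSup_natCast, inf_top_eq]
  calc R.op α f x = ⨆ n, R.op α (g n) x := by
        rw [op, hfg]
        exact lintegral_iSup hg hg_mono
    _ ≤ ∑' j, (R.op 1)^[j + 1] f x := iSup_le fun n =>
        (R.op_le_tsum_iterate_of_le_const (hg n) (ENNReal.natCast_ne_top n)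
          (fun _ => inf_le_right) hα x).trans
        (ENNReal.tsum_le_tsum fun j =>
          (R.monotone_op 1).iterate (j + 1) (fun _ => inf_le_left) x)

theorem pot_eq_tsum_iterate {f : E → ℝ≥0∞} (hf : Measurable f) :
    R.pot f = fun x => ∑' j, (R.op 1)^[j + 1] f x := funext fun x =>
  le_antisymm (iSup₂_le fun _ hα => R.op_le_tsum_iterate hf hα x)
    (ENNReal.tsum_le_of_sum_range_le fun k => R.sum_iterate_op_one_le_pot hf k x)

theorem measurable_pot {f : E → ℝ≥0∞} (hf : Measurable f) : Measurable (R.pot f) := by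
  rw [R.pot_eq_tsum_iterate hf]
  exact Measurable.tsum fun j => R.measurable_iterate_op_one hf (j + 1)

theorem iterate_op_one_pot {f : E → ℝ≥0∞} (hf : Measurable f) (k : ℕ) :
    (R.op 1)^[k] (R.pot f) = fun x => ∑' j, (R.op 1)^[j + k + 1] f x := by
  induction k with
  | zero => exact R.pot_eq_tsum_iterate hf
  | succ k ih =>
    funext x
    rw [Function.iterate_succ_apply', ih, op,
      lintegral_tsum fun j => (R.measurable_iterate_op_one hf _).aemeasurable]
    simp_rw [← add_assoc, Function.iterate_succ_apply' (R.op 1) (_ + k + 1)]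
    rfl

theorem op_one_pot_le_pot {f : E → ℝ≥0∞} (hf : Measurable f) : R.op 1 (R.pot f) ≤ R.pot f := by
  intro x
  rw [← Function.iterate_one (R.op 1), R.iterate_op_one_pot hf 1, R.pot_eq_tsum_iterate hf]
  exact ENNReal.tsum_comp_le_tsum_of_injective (add_left_injective 1) _

theorem tendsto_iterate_op_one_pot {f : E → ℝ≥0∞} (hf : Measurable f) {x : E}
    (hx : R.pot f x ≠ ⊤) : Tendsto (fun k => (R.op 1)^[k] (R.pot f) x) atTop (𝓝 0) := by
  rw [R.pot_eq_tsum_iterate hf] at hx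
  simp_rw [R.iterate_op_one_pot hf]
  exact ENNReal.tendsto_sum_nat_add (fun j => (R.op 1)^[j + 1] f x) hx

section Invariance

variable {R} {m : Measure E}

theorem lintegral_op_of_dual_conservative {S : SubMarkovResolvent E} (hD : R.InDuality S m)
    {α : ℝ} (hα : 0 < α) (hS : ∀ᵐ x ∂m, ENNReal.ofReal α * S.op α (fun _ => 1) x = 1)
    {h : E → ℝ≥0∞} (hh : Measurable h) :
    ENNReal.ofReal α * ∫⁻ x, R.op α h x ∂m = ∫⁻ x, h x ∂m := by
  have hdual := hD α hα (fun _ => 1) h measurable_const hh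
  simp only [one_mul] at hdual
  rw [hdual, ← lintegral_const_mul' _ _ ENNReal.ofReal_ne_top]
  refine lintegral_congr_ae ?_
  filter_upwards [hS] with x hx
  rw [mul_left_comm, hx, mul_one]

variable (hinv : ∀ h : E → ℝ≥0∞, Measurable h → ∫⁻ x, R.op 1 h x ∂m = ∫⁻ x, h x ∂m)
include hinv

theorem lintegral_iterate_op_one {h : E → ℝ≥0∞} (hh : Measurable h) (k : ℕ) :
    ∫⁻ x, (R.op 1)^[k] h x ∂m = ∫⁻ x, h x ∂m := by
  induction k with
  | zero => rfl
  | succ k ih =>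
    rw [Function.iterate_succ_apply', hinv _ (R.measurable_iterate_op_one hh k), ih]

theorem iterate_op_one_ae_eq_of_op_one_le {v : E → ℝ≥0∞} (hv : Measurable v)
    (hsup : R.op 1 v ≤ v) (hint : ∫⁻ x, v x ∂m ≠ ⊤) (k : ℕ) : (R.op 1)^[k] v =ᵐ[m] v := by
  have hle : (R.op 1)^[k] v ≤ v :=
    (R.monotone_op 1).antitone_iterate_of_map_le hsup (Nat.zero_le k)
  refine ae_eq_of_ae_le_of_lintegral_le (ae_of_all _ hle) ?_ hv.aemeasurable ?_ <;>
    rw [lintegral_iterate_op_one hinv hv k]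
  exact hint

end Invariance

end SubMarkovResolvent

theorem recurrent_of_dual_conservative_general {E : Type*} [MeasurableSpace E]
    (R S : SubMarkovResolvent E) (m : MeasureTheory.Measure E)
    (hD : R.InDuality S m)
    (h1 : ∀ α : ℝ, 0 < α → ∀ᵐ x ∂m, ENNReal.ofReal α * S.op α (fun _ => 1) x = 1)
    (s : E → ℝ≥0∞) (hs : R.Excessive s) (hsint : ∫⁻ x, s x ∂m < ⊤)
    (hspos : ∀ᵐ x ∂m, 0 < s x) :
    R.Recurrent m := by
  intro f hf _
  have hinv : ∀ h : E → ℝ≥0∞, Measurable h → ∫⁻ x, R.op 1 h x ∂m = ∫⁻ x, h x ∂m :=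
    fun h hh => by
      simpa using SubMarkovResolvent.lintegral_op_of_dual_conservative hD one_pos (h1 1 one_pos) hh
  set v : E → ℝ≥0∞ := R.pot f ⊓ s
  have hsup : R.op 1 v ≤ v := le_inf
    ((R.monotone_op 1 inf_le_left).trans (R.op_one_pot_le_pot hf))
    ((R.monotone_op 1 inf_le_right).trans fun x => by simpa using hs.2.1 1 one_pos x)
  have hint : ∫⁻ x, v x ∂m ≠ ⊤ := (lt_of_le_of_lt (lintegral_mono fun _ => inf_le_right) hsint).ne
  have hfix := ae_all_iff.mpr (SubMarkovResolvent.iterate_op_one_ae_eq_of_op_one_le hinv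
    ((R.measurable_pot hf).inf hs.1) hsup hint)
  refine measure_eq_zero_iff_ae_notMem.mpr ?_
  filter_upwards [hfix, hspos] with x hx hsx ⟨hpos, hfin⟩
  have hv0 : v x = 0 := le_antisymm (ge_of_tendsto' (R.tendsto_iterate_op_one_pot hf hfin.ne)
    fun k => (hx k).symm.le.trans ((R.monotone_op 1).iterate k inf_le_left x)) zero_le
  rcases min_eq_bot.mp hv0 with h | h
  exacts [hpos.ne' h, hsx.ne' h]

/-- If `α U*_α 1 = 1` `m`-a.e. for all `α > 0` and there exists a strictly positive
`m`-integrable `U`-excessive function, then `U` is `m`-recurrent. -/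
theorem recurrent_of_dual_conservative {E : Type*} [MeasurableSpace E]
    (R S : SubMarkovResolvent E) (m : MeasureTheory.Measure E) [MeasureTheory.SigmaFinite m]
    (hm : R.SubInvariant m) (hD : R.InDuality S m)
    (h1 : ∀ α : ℝ, 0 < α → ∀ᵐ x ∂m, ENNReal.ofReal α * S.op α (fun _ => 1) x = 1)
    (s : E → ℝ≥0∞) (hs : R.Excessive s) (hsint : ∫⁻ x, s x ∂m < ⊤)
    (hspos : ∀ᵐ x ∂m, 0 < s x) :
    R.Recurrent m :=
  recurrent_of_dual_conservative_general R S m hD h1 s hs hsint hspos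
end

section
/- For each p ∈ [1,∞], the set A_p of U-invariant functions in L^p(E,m) is a vector lattice with respect to the pointwise order: in particular, if u is U-invariant then |u|, u⁺, and u⁻ are U-invariant. -/
open MeasureTheory ENNReal Filter Set

/-!
Sub-invariance `m (α U_α) ≤ m` makes every `m`-null set null for `U_α(x, ·)` at `m`-a.e. `x`, and
bounds `∫ U_α |u|^p dm` by `α⁻¹ ∫ |u|^p dm`; so a function in `L^p(m)`, `p ≥ 1`, is integrable
for the finite measures `U_α(x, ·)` at `m`-a.e. `x`, and `U_α` acts linearly on such functions.
For `|u|`, split a test function `f` along the sign of `u` as `f = f₊ + f₋`. Invariance gives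
`u(x) U_α f₊(x) = U_α(u f₊)(x) ≥ 0` and `u(x) U_α f₋(x) = U_α(u f₋)(x) ≤ 0`, hence
`U_α(|u| f) = u U_α f₊ - u U_α f₋ = |u| (U_α f₊ + U_α f₋) = |u| U_α f`.
The positive and negative parts are then `(|u| ± u) / 2`.
-/

namespace SubMarkovResolvent

variable {E : Type*} [MeasurableSpace E] {R : SubMarkovResolvent E} {m : Measure E} {α : ℝ}

lemma isFiniteMeasure_kernel (R : SubMarkovResolvent E) (hα : 0 < α) (x : E) :
    IsFiniteMeasure (R.kernel α x) :=
  ⟨ENNReal.lt_top_of_mul_ne_top_right (ne_top_of_le_ne_top one_ne_top (R.subMarkov α hα x))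
    (ENNReal.ofReal_pos.2 hα).ne'⟩

namespace SubInvariant

lemma ae_ae_kernel (hm : R.SubInvariant m) (hα : 0 < α) {P : E → Prop}
    (hP : ∀ᵐ y ∂m, P y) : ∀ᵐ x ∂m, ∀ᵐ y ∂(R.kernel α x), P y := by
  set N := toMeasurable m {y | ¬P y}
  have hN : MeasurableSet N := measurableSet_toMeasurable _ _
  have hmN : m N = 0 := by rw [measure_toMeasurable]; exact ae_iff.1 hP
  have hU : ENNReal.ofReal α * ∫⁻ x, R.op α (N.indicator 1) x ∂m = 0 := by
    refine nonpos_iff_eq_zero.1 ?_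
    simpa [lintegral_indicator_one hN, hmN] using hm α hα _ (measurable_one.indicator hN)
  have hUN : ∫⁻ x, R.kernel α x N ∂m = 0 := by
    simpa [op, lintegral_indicator_one hN, (ENNReal.ofReal_pos.2 hα).ne'] using hU
  have hmeas : Measurable fun x => R.kernel α x N := by
    simpa [lintegral_indicator_one hN] using R.measurable_op α hα _ (measurable_one.indicator hN)
  filter_upwards [(lintegral_eq_zero_iff hmeas).1 hUN] with x hx
  exact ae_iff.2 (measure_mono_null (subset_toMeasurable _ _) hx)

lemma ae_lintegral_kernel_lt_top (hm : R.SubInvariant m) (hα : 0 < α) {g : E → ℝ≥0∞}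
    (hg : Measurable g) (hg_fin : ∫⁻ y, g y ∂m ≠ ⊤) :
    ∀ᵐ x ∂m, ∫⁻ y, g y ∂(R.kernel α x) < ⊤ := by
  have hUg : ∫⁻ x, R.op α g x ∂m ≠ ⊤ :=
    (ENNReal.lt_top_of_mul_ne_top_right (ne_top_of_le_ne_top hg_fin (hm α hα g hg))
      (ENNReal.ofReal_pos.2 hα).ne').ne
  exact ae_lt_top (R.measurable_op α hα g hg) hUg

lemma ae_memLp_kernel (hm : R.SubInvariant m) (hα : 0 < α) {p : ℝ≥0∞} {u : E → ℝ}
    (hu : MemLp u p m) : ∀ᵐ x ∂m, MemLp u p (R.kernel α x) := by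
  obtain ⟨u', hu'_meas, huu'⟩ : ∃ u', StronglyMeasurable u' ∧ u =ᵐ[m] u' :=
    ⟨_, hu.1.stronglyMeasurable_mk, hu.1.ae_eq_mk⟩
  have hu' : MemLp u' p m := hu.ae_eq huu'
  have hfin : ∀ᵐ x ∂m, eLpNorm u' p (R.kernel α x) < ⊤ := by
    rcases eq_or_ne p 0 with rfl | hp0
    · simp
    rcases eq_or_ne p ⊤ with rfl | hptop
    · filter_upwards [hm.ae_ae_kernel hα (ae_le_eLpNormEssSup (f := u') (μ := m))] with x hx
      rw [eLpNorm_exponent_top]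
      exact (essSup_le_of_ae_le _ hx).trans_lt (by simpa [eLpNorm_exponent_top] using hu'.2)
    · simp_rw [eLpNorm_lt_top_iff_lintegral_rpow_enorm_lt_top hp0 hptop]
      exact hm.ae_lintegral_kernel_lt_top hα (hu'_meas.measurable.enorm.pow_const _)
        (lintegral_rpow_enorm_lt_top_of_eLpNorm_lt_top hp0 hptop hu'.2).ne
  filter_upwards [hm.ae_ae_kernel hα huu', hfin] with x hx hx_fin
  exact MemLp.ae_eq (EventuallyEq.symm hx) ⟨hu'_meas.aestronglyMeasurable, hx_fin⟩

lemma ae_integrable_kernel (hm : R.SubInvariant m) (hα : 0 < α) {p : ℝ≥0∞} (hp : 1 ≤ p)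
    {u : E → ℝ} (hu : MemLp u p m) : ∀ᵐ x ∂m, Integrable u (R.kernel α x) := by
  filter_upwards [hm.ae_memLp_kernel hα hu] with x hx
  have := R.isFiniteMeasure_kernel hα x
  exact hx.integrable hp

end SubInvariant

lemma integrable_mul_of_nonneg_of_le {μ : Measure E} {u f : E → ℝ} {C : ℝ} (hu : Integrable u μ)
    (hf : Measurable f) (hf0 : ∀ y, 0 ≤ f y) (hfC : ∀ y, f y ≤ C) :
    Integrable (fun y => u y * f y) μ :=
  hu.mul_bdd hf.aestronglyMeasurable
    (ae_of_all _ fun y => (Real.norm_of_nonneg (hf0 y)).trans_le (hfC y))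

lemma indicator_nonneg_of_nonneg {X : Type*} {f : X → ℝ} (hf0 : ∀ y, 0 ≤ f y) (s : Set X)
    (y : X) : 0 ≤ s.indicator f y :=
  Set.indicator_nonneg (fun z _ => hf0 z) y

lemma indicator_le_of_nonneg_of_le {X : Type*} {f : X → ℝ} {C : ℝ} (hf0 : ∀ y, 0 ≤ f y)
    (hfC : ∀ y, f y ≤ C) (s : Set X) (y : X) : s.indicator f y ≤ C :=
  (Set.indicator_le_self' (fun z _ => hf0 z) y).trans (hfC y)

lemma integral_abs_mul_eq_of_integral_mul_indicator_eq {μ : Measure E} [IsFiniteMeasure μ]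
    {u f : E → ℝ} {C a : ℝ} (hu : Integrable u μ) (hu_meas : Measurable u) (hf : Measurable f)
    (hf0 : ∀ y, 0 ≤ f y) (hfC : ∀ y, f y ≤ C)
    (hA : ∫ y, u y * {y | 0 ≤ u y}.indicator f y ∂μ = a * ∫ y, {y | 0 ≤ u y}.indicator f y ∂μ)
    (hAc : ∫ y, u y * {y | 0 ≤ u y}ᶜ.indicator f y ∂μ =
      a * ∫ y, {y | 0 ≤ u y}ᶜ.indicator f y ∂μ) :
    ∫ y, |u y| * f y ∂μ = |a| * ∫ y, f y ∂μ := by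
  set A := {y | 0 ≤ u y}
  have hA_meas : MeasurableSet A := measurableSet_le measurable_const hu_meas
  have hf_int : Integrable f μ := by
    simpa using integrable_mul_of_nonneg_of_le (integrable_const (1 : ℝ)) hf hf0 hfC
  have hf_split : ∫ y, f y ∂μ = (∫ y, A.indicator f y ∂μ) + ∫ y, Aᶜ.indicator f y ∂μ := by
    rw [integral_indicator hA_meas, integral_indicator hA_meas.compl,
      integral_add_compl hA_meas hf_int]
  have habs_split : (fun y => |u y| * f y) =
      fun y => u y * A.indicator f y - u y * Aᶜ.indicator f y := by
    ext y
    by_cases hy : y ∈ A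
    · simp [hy, abs_of_nonneg (show 0 ≤ u y from hy)]
    · simp [hy, abs_of_neg (not_le.1 (show ¬0 ≤ u y from hy))]
  have hA_nonneg : 0 ≤ ∫ y, u y * A.indicator f y ∂μ := by
    refine integral_nonneg fun y => ?_
    by_cases hy : y ∈ A
    · simpa [hy] using mul_nonneg (show 0 ≤ u y from hy) (hf0 y)
    · simp [hy]
  have hAc_nonpos : ∫ y, u y * Aᶜ.indicator f y ∂μ ≤ 0 := by
    refine integral_nonpos fun y => ?_
    by_cases hy : y ∈ A
    · simp [hy]
    · simpa [hy] using
        mul_nonpos_of_nonpos_of_nonneg (not_le.1 (show ¬0 ≤ u y from hy)).le (hf0 y)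
  rw [habs_split, integral_sub
    (integrable_mul_of_nonneg_of_le hu (hf.indicator hA_meas)
      (indicator_nonneg_of_nonneg hf0 A) (indicator_le_of_nonneg_of_le hf0 hfC A))
    (integrable_mul_of_nonneg_of_le hu (hf.indicator hA_meas.compl)
      (indicator_nonneg_of_nonneg hf0 Aᶜ) (indicator_le_of_nonneg_of_le hf0 hfC Aᶜ)),
    hf_split, hA, hAc]
  rw [hA] at hA_nonneg
  rw [hAc] at hAc_nonpos
  have h₁ := integral_nonneg (μ := μ) (f := A.indicator f) (indicator_nonneg_of_nonneg hf0 A)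
  have h₂ := integral_nonneg (μ := μ) (f := Aᶜ.indicator f) (indicator_nonneg_of_nonneg hf0 Aᶜ)
  rcases le_total 0 a with ha | ha
  · rw [abs_of_nonneg ha]; nlinarith
  · rw [abs_of_nonpos ha]; nlinarith

namespace Invariant

variable {u v : E → ℝ}

lemma smul (hu : R.Invariant m u) (c : ℝ) : R.Invariant m (c • u) := by
  intro α hα f hf hf0 hfC
  filter_upwards [hu α hα f hf hf0 hfC] with x hx
  simp only [opR, Pi.smul_apply, smul_eq_mul, mul_assoc] at hx ⊢
  rw [integral_const_mul, hx]

lemma neg (hu : R.Invariant m u) : R.Invariant m (-u) := by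
  simpa using hu.smul (-1)

lemma add (hu : R.Invariant m u) (hv : R.Invariant m v) (hm : R.SubInvariant m) {p : ℝ≥0∞}
    (hp : 1 ≤ p) (hu_Lp : MemLp u p m) (hv_Lp : MemLp v p m) : R.Invariant m (u + v) := by
  intro α hα f hf hf0 hfC
  obtain ⟨C, hC⟩ := hfC
  filter_upwards [hu α hα f hf hf0 ⟨C, hC⟩, hv α hα f hf hf0 ⟨C, hC⟩,
    hm.ae_integrable_kernel hα hp hu_Lp, hm.ae_integrable_kernel hα hp hv_Lp]
    with x hux hvx hu_int hv_int
  simp only [opR, Pi.add_apply, add_mul] at hux hvx ⊢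
  rw [integral_add (integrable_mul_of_nonneg_of_le hu_int hf hf0 hC)
    (integrable_mul_of_nonneg_of_le hv_int hf hf0 hC), hux, hvx]

lemma congr_ae (hu : R.Invariant m u) (hm : R.SubInvariant m) (huv : u =ᵐ[m] v) :
    R.Invariant m v := by
  intro α hα f hf hf0 hfC
  filter_upwards [hu α hα f hf hf0 hfC, hm.ae_ae_kernel hα huv, huv] with x hx hx_ker hx_eq
  simp only [opR] at hx ⊢
  rw [← hx_eq, ← hx]
  refine integral_congr_ae ?_
  filter_upwards [hx_ker] with y hy
  rw [hy]

lemma abs_of_measurable (hu : R.Invariant m u) (hm : R.SubInvariant m) {p : ℝ≥0∞} (hp : 1 ≤ p)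
    (hu_Lp : MemLp u p m) (hu_meas : Measurable u) : R.Invariant m fun x => |u x| := by
  intro α hα f hf hf0 ⟨C, hC⟩
  have hA : MeasurableSet {y | 0 ≤ u y} := measurableSet_le measurable_const hu_meas
  filter_upwards [hu α hα _ (hf.indicator hA) (indicator_nonneg_of_nonneg hf0 _)
      ⟨C, indicator_le_of_nonneg_of_le hf0 hC _⟩,
    hu α hα _ (hf.indicator hA.compl) (indicator_nonneg_of_nonneg hf0 _)
      ⟨C, indicator_le_of_nonneg_of_le hf0 hC _⟩,
    hm.ae_integrable_kernel hα hp hu_Lp] with x hA_x hAc_x hu_int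
  have := R.isFiniteMeasure_kernel hα x
  exact integral_abs_mul_eq_of_integral_mul_indicator_eq hu_int hu_meas hf hf0 hC hA_x hAc_x

lemma abs (hu : R.Invariant m u) (hm : R.SubInvariant m) {p : ℝ≥0∞} (hp : 1 ≤ p)
    (hu_Lp : MemLp u p m) : R.Invariant m fun x => |u x| := by
  obtain ⟨u', hu'_meas, huu'⟩ : ∃ u', StronglyMeasurable u' ∧ u =ᵐ[m] u' :=
    ⟨_, hu_Lp.1.stronglyMeasurable_mk, hu_Lp.1.ae_eq_mk⟩
  have hu' := (hu.congr_ae hm huu').abs_of_measurable hm hp (hu_Lp.ae_eq huu')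
    hu'_meas.measurable
  exact hu'.congr_ae hm (huu'.fun_comp (|·|)).symm

lemma max_zero (hu : R.Invariant m u) (hm : R.SubInvariant m) {p : ℝ≥0∞} (hp : 1 ≤ p)
    (hu_Lp : MemLp u p m) : R.Invariant m fun x => max (u x) 0 := by
  have h := ((hu.abs hm hp hu_Lp).add hu hm hp hu_Lp.abs hu_Lp).smul (1 / 2)
  convert h using 1
  ext x
  simp only [Pi.smul_apply, Pi.add_apply, smul_eq_mul]
  rcases le_total 0 (u x) with hux | hux
  · rw [abs_of_nonneg hux, max_eq_left hux]; ring
  · rw [abs_of_nonpos hux, max_eq_right hux]; ring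

end Invariant

end SubMarkovResolvent

theorem invariant_vector_lattice_general {E : Type*} [MeasurableSpace E]
    (R : SubMarkovResolvent E) (m : MeasureTheory.Measure E)
    (hm : R.SubInvariant m) (p : ℝ≥0∞) (hp : 1 ≤ p)
    (u v : E → ℝ) (hu : MeasureTheory.MemLp u p m) (hv : MeasureTheory.MemLp v p m)
    (hui : R.Invariant m u) (hvi : R.Invariant m v) (c : ℝ) :
    R.Invariant m (u + v) ∧ R.Invariant m (c • u) ∧
      R.Invariant m (fun x => |u x|) ∧
      R.Invariant m (fun x => max (u x) 0) ∧ R.Invariant m (fun x => max (-u x) 0) :=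
  ⟨hui.add hvi hm hp hu hv, hui.smul c, hui.abs hm hp hu, hui.max_zero hm hp hu,
    hui.neg.max_zero hm hp hu.neg⟩

/-- The `U`-invariant functions in `L^p(E,m)` form a vector lattice for the pointwise order:
sums, scalar multiples, absolute values and positive/negative parts of invariant functions
are invariant. -/
theorem invariant_vector_lattice {E : Type*} [MeasurableSpace E]
    (R : SubMarkovResolvent E) (m : MeasureTheory.Measure E) [MeasureTheory.SigmaFinite m]
    (hm : R.SubInvariant m) (p : ℝ≥0∞) (hp : 1 ≤ p)
    (u v : E → ℝ) (hu : MeasureTheory.MemLp u p m) (hv : MeasureTheory.MemLp v p m)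
    (hui : R.Invariant m u) (hvi : R.Invariant m v) (c : ℝ) :
    R.Invariant m (u + v) ∧ R.Invariant m (c • u) ∧
      R.Invariant m (fun x => |u x|) ∧
      R.Invariant m (fun x => max (u x) 0) ∧ R.Invariant m (fun x => max (-u x) 0) :=
  invariant_vector_lattice_general R m hm p hp u v hu hv hui hvi c
end
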